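/- arXiv:2310.15750 — 3 statements merged into one kernel-verified Lean document; each statement's English description precedes it below -/
import Mathlib

section
/- Let f : ℝ → ℝ be continuous on the compact interval [0, T], with f_max = sup of f on [0,T] and f_min = inf of f on [0,T]. Suppose a threshold C satisfies 0 < C < (f_max - f_min)/L for a positive integer L. Then the interval [f_min, f_max] contains at least L+1 values of the form f_min + k·C (k = 0, 1, ..., L), and for each consecutive pair of such levels, by the intermediate value theorem f attains every value between them; in particular there exist at least L distinct points t_1 < t_2 < ... < t_L in [0,T] such that |f(t_i) - f(t_{i-1})| ≥ C for consecutive points, i.e., one can find L points where f successively changes by at least C. -/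
/-!
Let `f` attain its maximum at `p` and its minimum at `q`, so `(L - 1) * C < f p - f q`. Between `q`
and `p` the intermediate value theorem yields `L` points, ordered in time, at which `f` climbs by
at least `C` from each to the next; if `p < q`, run the same construction for `-f`.
-/

open Set

theorem exists_fin_chain_of_mul_le_sub {f : ℝ → ℝ} {C : ℝ} (hC : 0 < C) (n : ℕ) {a b : ℝ}
    (hab : a ≤ b) (hf : ContinuousOn f (Icc a b)) (hn : n * C ≤ f b - f a) :
    ∃ t : Fin (n + 1) → ℝ, t (Fin.last n) = b ∧ (∀ i, t i ∈ Icc a b) ∧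
      ∀ i : Fin n, t i.castSucc < t i.succ ∧ C ≤ f (t i.succ) - f (t i.castSucc) := by
  induction n generalizing b with
  | zero => exact ⟨fun _ => b, rfl, fun _ => right_mem_Icc.2 hab, fun i => i.elim0⟩
  | succ n ih =>
    push_cast at hn
    obtain ⟨s, hs, hfs⟩ : ∃ s ∈ Icc a b, f s = f b - C :=
      intermediate_value_Icc hab hf ⟨by nlinarith [n.cast_nonneg (α := ℝ)], by linarith⟩
    have hsb : s < b := hs.2.lt_of_ne (by rintro rfl; linarith)
    obtain ⟨t, ht_last, ht_mem, ht_step⟩ :=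
      ih hs.1 (hf.mono (Icc_subset_Icc_right hs.2)) (by linarith)
    refine ⟨Fin.snoc t b, by simp, fun i => ?_, fun i => ?_⟩
    · induction i using Fin.lastCases with
      | last => simpa using right_mem_Icc.2 hab
      | cast i => simpa using Icc_subset_Icc_right hs.2 (ht_mem i)
    · induction i using Fin.lastCases with
      | last => simpa [ht_last, hfs] using hsb
      | cast i =>
        rw [Fin.succ_castSucc, Fin.snoc_castSucc, Fin.snoc_castSucc]
        exact ht_step i

theorem exists_strictMono_fin_chain_abs {f : ℝ → ℝ} {C : ℝ} (hC : 0 < C) (n : ℕ) {p q : ℝ}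
    (hf : ContinuousOn f (uIcc p q)) (hn : n * C ≤ f p - f q) :
    ∃ t : Fin (n + 1) → ℝ, StrictMono t ∧ (∀ i, t i ∈ uIcc p q) ∧
      ∀ i : Fin n, C ≤ |f (t i.succ) - f (t i.castSucc)| := by
  rcases le_total q p with hqp | hpq
  · rw [uIcc_of_ge hqp] at hf ⊢
    obtain ⟨t, -, ht_mem, ht_step⟩ := exists_fin_chain_of_mul_le_sub hC n hqp hf hn
    exact ⟨t, Fin.strictMono_iff_lt_succ.2 fun i => (ht_step i).1, ht_mem,
      fun i => (ht_step i).2.trans (le_abs_self _)⟩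
  · rw [uIcc_of_le hpq] at hf ⊢
    obtain ⟨t, -, ht_mem, ht_step⟩ :=
      exists_fin_chain_of_mul_le_sub (f := fun x => -f x) hC n hpq hf.neg (by linarith)
    refine ⟨t, Fin.strictMono_iff_lt_succ.2 fun i => (ht_step i).1, ht_mem, fun i => ?_⟩
    rw [abs_sub_comm]
    linarith [le_abs_self (f (t i.castSucc) - f (t i.succ)), (ht_step i).2]

theorem neuromorphic_min_measurements
    (T : ℝ) (hT : 0 < T) (f : ℝ → ℝ)
    (hf : ContinuousOn f (Set.Icc 0 T))
    (L : ℕ) (hL : 1 ≤ L) (C : ℝ)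
    (hC0 : 0 < C)
    (hC : C < (sSup (f '' Set.Icc 0 T) - sInf (f '' Set.Icc 0 T)) / L) :
    ∃ t : Fin L → ℝ, StrictMono t ∧ (∀ i, t i ∈ Set.Icc 0 T) ∧
      ∀ (i : ℕ) (h : i + 1 < L),
        C ≤ |f (t ⟨i + 1, h⟩) - f (t ⟨i, Nat.lt_of_succ_lt h⟩)| := by
  obtain ⟨n, rfl⟩ := Nat.exists_eq_add_of_le' hL
  have hne : (Icc 0 T).Nonempty := nonempty_Icc.2 hT.le
  obtain ⟨p, hp, hfp⟩ := isCompact_Icc.exists_sSup_image_eq hne hf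
  obtain ⟨q, hq, hfq⟩ := isCompact_Icc.exists_sInf_image_eq hne hf
  rw [hfp, hfq, lt_div_iff₀ (by positivity)] at hC
  push_cast at hC
  have hn : n * C ≤ f p - f q := by nlinarith
  obtain ⟨t, ht_mono, ht_mem, ht_step⟩ :=
    exists_strictMono_fin_chain_abs hC0 n (hf.mono (uIcc_subset_Icc hp hq)) hn
  exact ⟨t, ht_mono, fun i => uIcc_subset_Icc hp hq (ht_mem i), fun i h => ht_step ⟨i, by omega⟩⟩
end

section
/- Let T > 0, K ≥ 1, and consider two parameter sets (a_k, τ_k)_{k=0}^{K-1} and (a'_k, τ'_k)_{k=0}^{K-1} with all amplitudes nonzero, with τ's distinct in [0,T) and τ''s distinct in [0,T). If (1/T) ∑_{k} a_k e^{-j(2π/T) l τ_k} = (1/T) ∑_{k} a'_k e^{-j(2π/T) l τ'_k} for all l ∈ {-K, ..., K} (i.e., 2K+1 consecutive Fourier coefficients agree), then the parameter sets coincide up to permutation: {(a_k, τ_k)} = {(a'_k, τ'_k)}. -/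
/-!
With `z_k = exp(-2πi τ_k / T)`, the Fourier coefficients are the moments `∑ a_k z_k^l`, and the
nodes `z_k` are distinct because the `τ_k` lie in one period. The difference of the two atomic
measures `∑ a_k δ_{z_k}` and `∑ a'_k δ_{z'_k}` is supported on at most `2K` points and its
moments of orders `-K, …, K - 1` vanish; a Vandermonde determinant forces it to be zero, and
equal atomic measures with injective nodes and nonzero weights differ by a relabelling.
-/

open Finset Finsupp Function

namespace Finsupp

theorem linearCombination_equivFunOnFinite_symm {ι R M : Type*} [Fintype ι] [Semiring R]
    [AddCommMonoid M] [Module R M] (v : ι → M) (a : ι → R) :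
    linearCombination R v (equivFunOnFinite.symm a) = ∑ k, a k • v k := by
  rw [linearCombination_apply, Finsupp.sum_fintype _ _ (by simp)]
  rfl

theorem eq_zero_of_forall_linearCombination_pow_eq_zero {R : Type*} [CommRing R]
    [IsDomain R] {c : R →₀ R} {N : ℕ} (hc : #c.support ≤ N)
    (h : ∀ n < N, linearCombination R (· ^ n) c = 0) : c = 0 := by
  set f : Fin #c.support → R := fun j => c.support.equivFin.symm j
  have hf : Injective f := Subtype.val_injective.comp c.support.equivFin.symm.injective
  have hv : (fun j => c (f j)) = 0 := by
    refine Matrix.eq_zero_of_forall_pow_sum_mul_pow_eq_zero hf fun i => ?_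
    have := h i (i.2.trans_le hc)
    rw [linearCombination_apply, Finsupp.sum] at this
    rw [← this, ← c.support.sum_coe_sort]
    exact c.support.equivFin.symm.sum_comp (fun x : c.support => c x * x ^ (i : ℕ))
  ext x
  by_contra hx
  exact hx (by simpa [f] using congrFun hv (c.support.equivFin ⟨x, mem_support_iff.2 hx⟩))

-- `mapDomain z (equivFunOnFinite.symm a)` is the atomic measure `∑ k, a k • δ (z k)`.
theorem card_support_mapDomain_equivFunOnFinite_symm_le {ι α M : Type*} [Fintype ι]
    [AddCommMonoid M] (z : ι → α) (a : ι → M) :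
    #(mapDomain z (equivFunOnFinite.symm a)).support ≤ Fintype.card ι := by
  classical
  exact (card_le_card mapDomain_support).trans (card_image_le.trans (card_le_univ _))

theorem exists_perm_of_mapDomain_equivFunOnFinite_symm_eq {ι α M : Type*} [Fintype ι]
    [AddCommMonoid M] {z z' : ι → α} {a a' : ι → M} (hz : Injective z) (hz' : Injective z')
    (ha' : ∀ k, a' k ≠ 0)
    (h : mapDomain z (equivFunOnFinite.symm a) = mapDomain z' (equivFunOnFinite.symm a')) :
    ∃ σ : Equiv.Perm ι, ∀ k, a' k = a (σ k) ∧ z' k = z (σ k) := by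
  have hmatch : ∀ j, ∃ k, z' j = z k ∧ a' j = a k := by
    intro j
    have hj : mapDomain z (equivFunOnFinite.symm a) (z' j) = a' j := by
      rw [h, mapDomain_apply hz', coe_equivFunOnFinite_symm]
    by_cases hr : z' j ∈ Set.range z
    · obtain ⟨k, hk⟩ := hr
      rw [← hk, mapDomain_apply hz, coe_equivFunOnFinite_symm] at hj
      exact ⟨k, hk.symm, hj.symm⟩
    · rw [mapDomain_of_notMem_range _ _ hr] at hj
      exact absurd hj.symm (ha' j)
  choose σ hσz hσa using hmatch
  have hσ : Injective σ := fun i j hij => hz' (by rw [hσz, hσz, hij])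
  exact ⟨Equiv.ofBijective σ (Finite.injective_iff_bijective.mp hσ),
    fun k => ⟨hσa k, hσz k⟩⟩

end Finsupp

theorem exists_perm_of_sum_mul_pow_eq {ι R : Type*} [Fintype ι] [CommRing R] [IsDomain R]
    {z z' a a' : ι → R} (hz : Injective z) (hz' : Injective z') (ha' : ∀ k, a' k ≠ 0)
    (h : ∀ n < 2 * Fintype.card ι, ∑ k, a k * z k ^ n = ∑ k, a' k * z' k ^ n) :
    ∃ σ : Equiv.Perm ι, ∀ k, a' k = a (σ k) ∧ z' k = z (σ k) := by
  classical
  refine exists_perm_of_mapDomain_equivFunOnFinite_symm_eq hz hz' ha' (sub_eq_zero.mp ?_)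
  refine eq_zero_of_forall_linearCombination_pow_eq_zero (N := 2 * Fintype.card ι) ?_
    fun n hn => ?_
  · refine (card_le_card support_sub).trans ((card_union_le _ _).trans ?_)
    grw [card_support_mapDomain_equivFunOnFinite_symm_le,
      card_support_mapDomain_equivFunOnFinite_symm_le]
    omega
  · simp only [map_sub, linearCombination_mapDomain, linearCombination_equivFunOnFinite_symm,
      comp_apply, smul_eq_mul, h n hn, sub_self]

theorem exists_perm_of_sum_mul_zpow_eq {ι F : Type*} [Fintype ι] [Field F]
    {z z' a a' : ι → F} (hz : Injective z) (hz' : Injective z') (ha' : ∀ k, a' k ≠ 0)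
    (h0 : ∀ k, z k ≠ 0) (h0' : ∀ k, z' k ≠ 0) (m : ℤ)
    (h : ∀ n < 2 * Fintype.card ι, ∑ k, a k * z k ^ (m + n) = ∑ k, a' k * z' k ^ (m + n)) :
    ∃ σ : Equiv.Perm ι, ∀ k, a' k = a (σ k) ∧ z' k = z (σ k) := by
  obtain ⟨σ, hσ⟩ := exists_perm_of_sum_mul_pow_eq (a := fun k => a k * z k ^ m)
    (a' := fun k => a' k * z' k ^ m) hz hz' (fun k => mul_ne_zero (ha' k) (zpow_ne_zero m (h0' k)))
    fun n hn => by
      simpa only [zpow_add₀ (h0 _), zpow_add₀ (h0' _), zpow_natCast, mul_assoc] using h n hn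
  refine ⟨σ, fun k => ⟨?_, (hσ k).2⟩⟩
  have := (hσ k).1
  rw [(hσ k).2] at this
  exact mul_right_cancel₀ (zpow_ne_zero m (h0 (σ k))) this

open Complex Real

theorem Complex.injOn_exp_mul_I_Ico {c T : ℝ} (hc : c ≠ 0) (h : |c| * T ≤ 2 * π) :
    Set.InjOn (fun t : ℝ => cexp (c * t * I)) (Set.Ico 0 T) := by
  intro s hs t ht hst
  have hdiff : ∀ x ∈ (c * ·) '' Set.Ico 0 T, ∀ y ∈ (c * ·) '' Set.Ico 0 T,
      x - y ∈ Set.Ioo (-2 * π) (2 * π) := by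
    rintro _ ⟨x, ⟨hx0, hxT⟩, rfl⟩ _ ⟨y, ⟨hy0, hyT⟩, rfl⟩
    have hlt : |c * x - c * y| < 2 * π := by
      rw [← mul_sub, abs_mul]
      calc |c| * |x - y| < |c| * T :=
            mul_lt_mul_of_pos_left (abs_sub_lt_iff.2 ⟨by linarith, by linarith⟩) (abs_pos.2 hc)
        _ ≤ 2 * π := h
    rw [neg_mul]
    exact abs_lt.1 hlt
  have := Circle.exp_injOn_of_forall_sub_mem_Ioo hdiff (Set.mem_image_of_mem _ hs)
    (Set.mem_image_of_mem _ ht) (Subtype.ext (by simpa [Circle.coe_exp] using hst))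
  exact mul_left_cancel₀ hc this

theorem fri_identifiability_from_2Kplus1_fourier_coefficients_general
    (T : ℝ) (hT : 0 < T) (K : ℕ)
    (a a' : Fin K → ℂ) (ha' : ∀ k, a' k ≠ 0)
    (τ τ' : Fin K → ℝ)
    (hτ : Function.Injective τ) (hτ' : Function.Injective τ')
    (hmem : ∀ k, τ k ∈ Set.Ico 0 T) (hmem' : ∀ k, τ' k ∈ Set.Ico 0 T)
    (hagree : ∀ l ∈ Finset.Icc (-(K : ℤ)) (K : ℤ),
      (1 / (T : ℂ)) * ∑ k : Fin K,
        a k * Complex.exp (-(Complex.I * (2 * Real.pi / T) * (l : ℂ) * (τ k)))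
      = (1 / (T : ℂ)) * ∑ k : Fin K,
        a' k * Complex.exp (-(Complex.I * (2 * Real.pi / T) * (l : ℂ) * (τ' k)))) :
    ∃ σ : Equiv.Perm (Fin K), ∀ k, a' k = a (σ k) ∧ τ' k = τ (σ k) := by
  set z : ℝ → ℂ := fun t => cexp (↑(-(2 * π / T)) * t * I)
  have hz : Set.InjOn z (Set.Ico 0 T) :=
    injOn_exp_mul_I_Ico (by simp [hT.ne', pi_ne_zero])
      (by rw [abs_neg, abs_of_pos (by positivity), div_mul_cancel₀ _ hT.ne'])
  have hpow (l : ℤ) (t : ℝ) : cexp (-(I * (2 * π / T) * l * t)) = z t ^ l := by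
    rw [← exp_int_mul]
    push_cast
    ring_nf
  obtain ⟨σ, hσ⟩ := exists_perm_of_sum_mul_zpow_eq (z := z ∘ τ) (z' := z ∘ τ')
    (fun i j h => hτ (hz (hmem i) (hmem j) h)) (fun i j h => hτ' (hz (hmem' i) (hmem' j) h)) ha'
    (fun _ => exp_ne_zero _) (fun _ => exp_ne_zero _) (-K) fun n hn => by
      rw [Fintype.card_fin] at hn
      have := hagree (-K + n) (by simp only [Finset.mem_Icc]; omega)
      simp only [hpow] at this
      exact mul_left_cancel₀ (by simp [hT.ne']) this
  exact ⟨σ, fun k => ⟨(hσ k).1, hz (hmem' k) (hmem _) (hσ k).2⟩⟩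

theorem fri_identifiability_from_2Kplus1_fourier_coefficients
    (T : ℝ) (hT : 0 < T) (K : ℕ) (hK : 1 ≤ K)
    (a a' : Fin K → ℂ) (ha : ∀ k, a k ≠ 0) (ha' : ∀ k, a' k ≠ 0)
    (τ τ' : Fin K → ℝ)
    (hτ : Function.Injective τ) (hτ' : Function.Injective τ')
    (hmem : ∀ k, τ k ∈ Set.Ico 0 T) (hmem' : ∀ k, τ' k ∈ Set.Ico 0 T)
    (hagree : ∀ l ∈ Finset.Icc (-(K : ℤ)) (K : ℤ),
      (1 / (T : ℂ)) * ∑ k : Fin K,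
        a k * Complex.exp (-(Complex.I * (2 * Real.pi / T) * (l : ℂ) * (τ k)))
      = (1 / (T : ℂ)) * ∑ k : Fin K,
        a' k * Complex.exp (-(Complex.I * (2 * Real.pi / T) * (l : ℂ) * (τ' k)))) :
    ∃ σ : Equiv.Perm (Fin K), ∀ k, a' k = a (σ k) ∧ τ' k = τ (σ k) :=
  fri_identifiability_from_2Kplus1_fourier_coefficients_general T hT K a a' ha' τ τ' hτ hτ' hmem
    hmem' hagree
end

section
/- Let Q ≥ 1, K ≥ 1, and let ϑ_0, ..., ϑ_{K-1} be distinct unit-modulus complex numbers. For each channel i ∈ {1,...,Q}, let x̂^{(i)}_l = ∑_{k=0}^{K-1} c^{(i)}_k ϑ_k^l with coefficients c^{(i)}_k ∈ ℂ, and suppose that for every k there exists some channel i with c^{(i)}_k ≠ 0. Let Γ_K(x̂^{(i)}) be the (K+1)×(K+1) Toeplitz matrix of channel i and let Γ be the Q(K+1) × (K+1) vertical stack of these matrices. Then the nullspace of Γ is exactly one-dimensional, spanned by the common annihilating filter h with H(z) = h_0 ∏_{k=0}^{K-1} (1 − ϑ_k z^{-1}). -/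
/-!
Row `(i, p)` of `Γ v` equals `∑ₖ cᵢₖ ϑₖ^(p-K) V(ϑₖ)` with `V(z) = ∑ₛ vₛ z^(K-s)`. Already the
first `K` rows of a channel form an invertible Vandermonde system, so `Γ v = 0` forces
`cᵢₖ V(ϑₖ) = 0` for all `i, k`, and since every generator is active in some channel, `V` vanishes
at the `K` distinct points `ϑₖ`. Having degree at most `K`, `V` is then a multiple of
`∏ₖ (z - ϑₖ)`, whose coefficient vector read from the top is `h`.
-/

open Polynomial Finset Matrix

namespace Polynomial

section OfRevCoeffs

variable {R : Type*}

/-- `z^K · ∑ₛ vₛ z^(-s)`: the transfer function of the filter `v` with its negative powers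
cleared. -/
noncomputable def ofRevCoeffs [Semiring R] (K : ℕ) (v : Fin (K + 1) → R) : R[X] :=
  ∑ s : Fin (K + 1), C (v s) * X ^ (K - s)

lemma coeff_ofRevCoeffs_sub [Semiring R] {K : ℕ} (v : Fin (K + 1) → R) (t : Fin (K + 1)) :
    (ofRevCoeffs K v).coeff (K - t) = v t := by
  rw [ofRevCoeffs, finsetSum_coeff, Finset.sum_eq_single t]
  · simp
  · intro s _ hst
    rw [coeff_C_mul_X_pow, if_neg]
    omega
  · simp

lemma natDegree_ofRevCoeffs_le [Semiring R] {K : ℕ} (v : Fin (K + 1) → R) :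
    (ofRevCoeffs K v).natDegree ≤ K :=
  natDegree_sum_le_of_forall_le _ _ fun _ _ =>
    (natDegree_C_mul_X_pow_le _ _).trans (Nat.sub_le _ _)

lemma ofRevCoeffs_injective [Semiring R] {K : ℕ} : Function.Injective (ofRevCoeffs (R := R) K) :=
  fun v w hvw => _root_.funext fun t => by
    rw [← coeff_ofRevCoeffs_sub v t, ← coeff_ofRevCoeffs_sub w t, hvw]

lemma ofRevCoeffs_smul [CommSemiring R] {K : ℕ} (a : R) (v : Fin (K + 1) → R) :
    ofRevCoeffs K (a • v) = C a * ofRevCoeffs K v := by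
  simp only [ofRevCoeffs, Finset.mul_sum, Pi.smul_apply, smul_eq_mul, C_mul, mul_assoc]

lemma eval_ofRevCoeffs [CommSemiring R] {K : ℕ} (v : Fin (K + 1) → R) (x : R) :
    (ofRevCoeffs K v).eval x = ∑ s : Fin (K + 1), v s * x ^ (K - s) := by
  simp [ofRevCoeffs, eval_finsetSum]

lemma ofRevCoeffs_coeff_sub_eq_self [Semiring R] {K : ℕ} {p : R[X]} (hp : p.natDegree ≤ K) :
    ofRevCoeffs K (fun r => p.coeff (K - r)) = p :=
  calc ofRevCoeffs K (fun r => p.coeff (K - r))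
      = ∑ s : Fin (K + 1), C (p.coeff (Fin.rev s)) * X ^ (Fin.rev s : ℕ) := by
        simp only [ofRevCoeffs, Fin.val_rev, Nat.add_sub_add_right]
    _ = ∑ s : Fin (K + 1), C (p.coeff s) * X ^ (s : ℕ) :=
        Equiv.sum_comp Fin.revPerm fun s : Fin (K + 1) => C (p.coeff s) * X ^ (s : ℕ)
    _ = p := by
        rw [Fin.sum_univ_eq_sum_range (fun i => C (p.coeff i) * X ^ i)]
        exact (as_sum_range_C_mul_X_pow' p (by omega)).symm

end OfRevCoeffs

lemma eval_prod_X_sub_C_self {R ι : Type*} [CommRing R] [Fintype ι] (ϑ : ι → R) (k : ι) :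
    (∏ j, (X - C (ϑ j))).eval (ϑ k) = 0 := by
  rw [eval_prod]
  exact prod_eq_zero (mem_univ k) (by simp)

lemma eq_C_coeff_mul_prod_X_sub_C {R : Type*} [CommRing R] [IsDomain R] {n : ℕ} {ϑ : Fin n → R}
    (hϑ : Function.Injective ϑ) {p : R[X]} (hp : p.natDegree ≤ n) (hroot : ∀ k, p.eval (ϑ k) = 0) :
    p = C (p.coeff n) * ∏ k, (X - C (ϑ k)) := by
  have hmonic : (∏ k, (X - C (ϑ k))).Monic := monic_prod_of_monic _ _ fun k _ => monic_X_sub_C _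
  have hdeg : (∏ k, (X - C (ϑ k))).natDegree = n := by simp
  refine eq_of_degree_sub_lt_of_eval_index_eq univ hϑ.injOn ?_ fun k _ => ?_
  · rw [card_univ, Fintype.card_fin, degree_lt_iff_coeff_zero]
    intro m hm
    rw [coeff_sub, coeff_C_mul]
    rcases hm.eq_or_lt with rfl | hm
    · have hlead := hmonic.leadingCoeff
      rw [leadingCoeff, hdeg] at hlead
      rw [hlead, mul_one, sub_self]
    · rw [coeff_eq_zero_of_natDegree_lt (hp.trans_lt hm),
        coeff_eq_zero_of_natDegree_lt (hdeg.trans_lt hm), mul_zero, sub_zero]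
  · rw [hroot, eval_mul, eval_prod_X_sub_C_self, mul_zero]

end Polynomial

section BlockToeplitz

variable {F ι : Type*} [Field F] {K : ℕ}

/-- The vertical stack of the Toeplitz matrices `Γ_K(x̂⁽ⁱ⁾)` of the channels
`x̂⁽ⁱ⁾_l = ∑ₖ cᵢₖ ϑₖ^l`. -/
def blockToeplitz (c : ι → Fin K → F) (ϑ : Fin K → F) :
    Matrix (ι × Fin (K + 1)) (Fin (K + 1)) F :=
  Matrix.of fun p s => ∑ k : Fin K, c p.1 k * ϑ k ^ (((p.2 : ℕ) : ℤ) - ((s : ℕ) : ℤ))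

lemma blockToeplitz_mulVec_apply {c : ι → Fin K → F} {ϑ : Fin K → F} (hϑ : ∀ k, ϑ k ≠ 0)
    (v : Fin (K + 1) → F) (i : ι) (p : Fin (K + 1)) :
    (blockToeplitz c ϑ *ᵥ v) (i, p) =
      ∑ k, c i k * (ϑ k ^ K)⁻¹ * (ofRevCoeffs K v).eval (ϑ k) * ϑ k ^ (p : ℕ) := by
  simp only [blockToeplitz, Matrix.mulVec, dotProduct, Matrix.of_apply, sum_mul,
    eval_ofRevCoeffs, mul_sum]
  rw [sum_comm]
  refine sum_congr rfl fun k _ => sum_congr rfl fun s _ => ?_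
  have hϑK := pow_ne_zero K (hϑ k)
  rw [zpow_sub₀ (hϑ k), zpow_natCast, zpow_natCast, pow_sub₀ _ (hϑ k) s.is_le]
  field_simp

lemma blockToeplitz_mulVec_eq_zero_iff {c : ι → Fin K → F} {ϑ : Fin K → F}
    (hinj : Function.Injective ϑ) (hϑ : ∀ k, ϑ k ≠ 0) (hc : ∀ k, ∃ i, c i k ≠ 0)
    (v : Fin (K + 1) → F) :
    blockToeplitz c ϑ *ᵥ v = 0 ↔ ∀ k, (ofRevCoeffs K v).eval (ϑ k) = 0 := by
  constructor
  · intro hv k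
    obtain ⟨i, hi⟩ := hc k
    have hchannel : (fun k => c i k * (ϑ k ^ K)⁻¹ * (ofRevCoeffs K v).eval (ϑ k)) = 0 :=
      Matrix.eq_zero_of_forall_pow_sum_mul_pow_eq_zero hinj fun p => by
        simpa [blockToeplitz_mulVec_apply hϑ] using congrFun hv (i, p.castSucc)
    simpa [hi, hϑ k] using congrFun hchannel k
  · intro hv
    ext ⟨i, p⟩
    simp [blockToeplitz_mulVec_apply hϑ, hv]

end BlockToeplitz

theorem block_annihilation_nullspace_one_dimensional_general
    (Q : ℕ) (K : ℕ)
    (ϑ : Fin K → ℂ) (hinj : Function.Injective ϑ) (habs : ∀ k, ‖ϑ k‖ = 1)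
    (c : Fin Q → Fin K → ℂ) (hc : ∀ k, ∃ i, c i k ≠ 0)
    (h : Fin (K + 1) → ℂ)
    (hh : ∀ r : Fin (K + 1),
      h r = (∏ k : Fin K, (Polynomial.X - Polynomial.C (ϑ k))).coeff (K - (r : ℕ))) :
    LinearMap.ker (Matrix.mulVecLin (Matrix.of
        fun (p : Fin Q × Fin (K + 1)) (s : Fin (K + 1)) =>
          ∑ k : Fin K, c p.1 k * ϑ k ^ (((p.2 : ℕ) : ℤ) - ((s : ℕ) : ℤ))))
      = Submodule.span ℂ {h} := by
  have hϑ : ∀ k, ϑ k ≠ 0 := fun k h0 => by simpa [h0] using habs k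
  have hP : ofRevCoeffs K h = ∏ k, (X - C (ϑ k)) := by
    rw [_root_.funext hh]
    exact ofRevCoeffs_coeff_sub_eq_self (by simp)
  ext v
  change blockToeplitz c ϑ *ᵥ v = 0 ↔ _
  rw [blockToeplitz_mulVec_eq_zero_iff hinj hϑ hc, Submodule.mem_span_singleton]
  constructor
  · intro hroot
    refine ⟨(ofRevCoeffs K v).coeff K, ofRevCoeffs_injective ?_⟩
    rw [ofRevCoeffs_smul, hP]
    exact (eq_C_coeff_mul_prod_X_sub_C hinj (natDegree_ofRevCoeffs_le v) hroot).symm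
  · rintro ⟨a, rfl⟩ k
    rw [ofRevCoeffs_smul, hP, eval_mul, eval_prod_X_sub_C_self, mul_zero]

theorem block_annihilation_nullspace_one_dimensional
    (Q : ℕ) (hQ : 1 ≤ Q) (K : ℕ) (hK : 1 ≤ K)
    (ϑ : Fin K → ℂ) (hinj : Function.Injective ϑ) (habs : ∀ k, ‖ϑ k‖ = 1)
    (c : Fin Q → Fin K → ℂ) (hc : ∀ k, ∃ i, c i k ≠ 0)
    (h : Fin (K + 1) → ℂ)
    (hh : ∀ r : Fin (K + 1),
      h r = (∏ k : Fin K, (Polynomial.X - Polynomial.C (ϑ k))).coeff (K - (r : ℕ))) :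
    LinearMap.ker (Matrix.mulVecLin (Matrix.of
        fun (p : Fin Q × Fin (K + 1)) (s : Fin (K + 1)) =>
          ∑ k : Fin K, c p.1 k * ϑ k ^ (((p.2 : ℕ) : ℤ) - ((s : ℕ) : ℤ))))
      = Submodule.span ℂ {h} :=
  block_annihilation_nullspace_one_dimensional_general Q K ϑ hinj habs c hc h hh
end
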